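/- Let A be a d-regular graph and B a graph on vertex set B, with g_k : A × B → ℝ (for k ≥ 0) satisfying g_k(a,b) = (−1)^{f(a)} · E_{b'∼N(b)}[g_{k−1}(φ(a, b̂), b')] for some f : A → {0,1} and rotation map φ. Suppose the distribution drawing (a,b) uniform and b', b'' ∼ N(b) independently and outputting (φ(a,b̂), b', b'') equals the distribution of a uniform vertex of A together with a uniform edge of B². If B is a λ-expander, then with ε_{k−1}(a) = E_b[g_{k−1}(a,b)] and σ_{k−1}² = E_{a,b}[g_{k−1}²] − (E_{a,b}[g_{k−1}])², one has E_{a,b}[g_k(a,b)²] ≤ E_a[ε_{k−1}(a)²] + λ² σ_{k−1}². -/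
import Mathlib


open Finset

noncomputable def expec {V : Type*} [Fintype V] (f : V → ℝ) : ℝ :=
  (∑ a, f a) / (Fintype.card V : ℝ)

noncomputable def sdev {V : Type*} [Fintype V] (f : V → ℝ) : ℝ :=
  Real.sqrt (expec (fun a => f a ^ 2) - (expec f) ^ 2)

noncomputable def edgeE {V : Type*} [Fintype V] {d : ℕ} (N : V → Fin d → V)
    (F : V → V → ℝ) : ℝ :=
  (∑ a, ∑ i, F a (N a i)) / ((Fintype.card V : ℝ) * d)

/-- `A` is a `lam`-expander in the mixing-lemma sense. -/
def IsExpander {V : Type*} [Fintype V] {d : ℕ} (N : V → Fin d → V) (lam : ℝ) : Prop :=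
  ∀ f g : V → ℝ,
    |edgeE N (fun a a' => f a * g a') - expec f * expec g| ≤ lam * sdev f * sdev g

/-- The graph given by the rotation map `N` is undirected (the edge multiset is symmetric). -/
def SymmGraph {V : Type*} [Fintype V] {d : ℕ} (N : V → Fin d → V) : Prop :=
  ∀ F : V → V → ℝ, (∑ a, ∑ i, F a (N a i)) = ∑ a, ∑ i, F (N a i) a
/-- The "ignore first step" trick for s-wide replacement product walks:
E_{a,b}[g_k(a,b)²] ≤ E_a[ε_{k-1}(a)²] + lam² σ_{k-1}². -/
lemma var_nonneg' {V : Type*} [Fintype V] [Nonempty V] (f : V → ℝ) :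
    (expec f) ^ 2 ≤ expec (fun a => f a ^ 2) := by
  have hn : (0:ℝ) < (Fintype.card V : ℝ) := by
    exact_mod_cast Fintype.card_pos
  unfold expec
  rw [div_pow, div_le_div_iff₀ (by positivity) hn]
  have h := sq_sum_le_card_mul_sum_sq (s := (univ : Finset V)) (f := f)
  rw [Finset.card_univ] at h
  nlinarith [Finset.sum_nonneg (fun i (_ : i ∈ (univ : Finset V)) => sq_nonneg (f i))]

lemma step' {W : Type*} [Fintype W] [Nonempty W] {e : ℕ} (he : 0 < e)
    (NB : W → Fin e → W) (lam : ℝ) (hlam : 0 ≤ lam) (hB : IsExpander NB lam) (f : W → ℝ) :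
    expec (fun b => ((∑ i, f (NB b i)) / (e:ℝ)) ^ 2)
      ≤ (expec f)^2 + lam^2 * (expec (fun b => f b ^ 2) - (expec f)^2) := by
  have hm : (0:ℝ) < (Fintype.card W : ℝ) := by exact_mod_cast Fintype.card_pos
  have heR : (0:ℝ) < (e:ℝ) := by exact_mod_cast he
  set F : W → ℝ := fun b => (∑ i, f (NB b i)) / (e:ℝ) with hF
  have hs1 : sdev (fun _ : W => (1:ℝ)) = 0 := by
    unfold sdev expec
    simp [Finset.sum_const, Finset.card_univ, div_self hm.ne']
  have he1 : expec (fun _ : W => (1:ℝ)) = 1 := by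
    unfold expec
    simp [Finset.sum_const, Finset.card_univ, div_self hm.ne']
  have hedge1 : edgeE NB (fun a a' => (1:ℝ) * f a') = expec F := by
    unfold edgeE expec
    simp only [one_mul, hF]
    rw [← Finset.sum_div, div_div]
    ring_nf
  have h1 : expec F = expec f := by
    have h := hB (fun _ => 1) f
    rw [hs1, hedge1, he1, one_mul] at h
    have h0 : |expec F - expec f| = 0 :=
      le_antisymm (by linarith) (abs_nonneg _)
    linarith [sub_eq_zero.mp (abs_eq_zero.mp h0)]
  have h2 : edgeE NB (fun a a' => F a * f a') = expec (fun b => F b ^ 2) := by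
    have key : ∀ b, ∑ i, F b * f (NB b i) = (e:ℝ) * F b ^ 2 := by
      intro b
      rw [← Finset.mul_sum, hF]
      field_simp
    unfold edgeE expec
    rw [Finset.sum_congr rfl fun b _ => key b, ← Finset.mul_sum]
    field_simp
    try ring
  have hvF : (expec F) ^ 2 ≤ expec (fun b => F b ^ 2) := var_nonneg' F
  have hvf : (expec f) ^ 2 ≤ expec (fun b => f b ^ 2) := var_nonneg' f
  have hsF : sdev F ^ 2 = expec (fun b => F b ^ 2) - (expec F) ^ 2 :=
    Real.sq_sqrt (by linarith)
  have hsf : sdev f ^ 2 = expec (fun b => f b ^ 2) - (expec f) ^ 2 :=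
    Real.sq_sqrt (by linarith)
  have hexp := hB F f
  rw [h2, h1] at hexp
  have habs := (abs_le.mp hexp).2
  have hFn : 0 ≤ sdev F := Real.sqrt_nonneg _
  have hfn : 0 ≤ sdev f := Real.sqrt_nonneg _
  have hsF' : sdev F ^ 2 = expec (fun b => F b ^ 2) - (expec f) ^ 2 := by
    rw [hsF, h1]
  have hq : expec f * expec f = (expec f) ^ 2 := (pow_two _).symm
  show expec (fun b => F b ^ 2) ≤ _
  nlinarith [sq_nonneg (sdev F - lam * sdev f), h1, hsF, hsf, habs]

theorem stmt15 {V W D : Type*} [Fintype V] [Fintype W] [Nonempty V] [Nonempty W]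
    {e : ℕ} (he : 0 < e) (NB : W → Fin e → W) (lam : ℝ) (hlam : 0 ≤ lam)
    (hB : IsExpander NB lam)
    (φ : V → D → V) (π : W → D) (f : V → Bool) (g : ℕ → V → W → ℝ)
    (hrec : ∀ k, 1 ≤ k → ∀ (a : V) (b : W),
      g k a b = (if f a then (-1 : ℝ) else 1)
        * ((∑ i, g (k - 1) (φ a (π b)) (NB b i)) / e))
    (hdist : ∀ F : V → W → W → ℝ,
      (∑ a : V, ∑ b : W, ∑ i, ∑ j, F (φ a (π b)) (NB b i) (NB b j))
        = ∑ a : V, ∑ b : W, ∑ i, ∑ j, F a (NB b i) (NB b j)) :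
    ∀ k : ℕ, 1 ≤ k →
      (∑ a : V, ∑ b : W, (g k a b) ^ 2) / ((Fintype.card V : ℝ) * Fintype.card W)
        ≤ (∑ a : V, ((∑ b : W, g (k - 1) a b) / (Fintype.card W : ℝ)) ^ 2)
              / (Fintype.card V : ℝ)
          + lam ^ 2 *
            ((∑ a : V, ∑ b : W, (g (k - 1) a b) ^ 2)
                / ((Fintype.card V : ℝ) * Fintype.card W)
              - ((∑ a : V, ∑ b : W, g (k - 1) a b)
                / ((Fintype.card V : ℝ) * Fintype.card W)) ^ 2) := by
  intro k hk
  have hn : (0:ℝ) < (Fintype.card V : ℝ) := by exact_mod_cast Fintype.card_pos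
  have hm : (0:ℝ) < (Fintype.card W : ℝ) := by exact_mod_cast Fintype.card_pos
  have heR : (0:ℝ) < (e:ℝ) := by exact_mod_cast he
  set n : ℝ := (Fintype.card V : ℝ) with hn'
  set m : ℝ := (Fintype.card W : ℝ) with hm'
  set h : V → W → ℝ := g (k - 1) with hh
  -- Step A+B: rewrite the LHS sum
  have hA : ∑ a : V, ∑ b : W, (g k a b) ^ 2
      = ∑ a : V, ∑ b : W, ((∑ i, h a (NB b i)) / (e:ℝ)) ^ 2 := by
    have e1 : ∀ (a : V) (b : W), (g k a b) ^ 2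
        = (∑ i, ∑ j, h (φ a (π b)) (NB b i) * h (φ a (π b)) (NB b j)) / ((e:ℝ) ^ 2) := by
      intro a b
      rw [hrec k hk a b, mul_pow]
      have hsq : ((if f a then (-1:ℝ) else 1)) ^ 2 = 1 := by split <;> norm_num
      rw [hsq, one_mul, div_pow, sq (∑ i, g (k-1) (φ a (π b)) (NB b i)), Finset.sum_mul_sum]
    have e2 : ∀ (x : V) (b : W), ((∑ i, h x (NB b i)) / (e:ℝ)) ^ 2
        = (∑ i, ∑ j, h x (NB b i) * h x (NB b j)) / ((e:ℝ) ^ 2) := by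
      intro x b
      rw [div_pow, sq (∑ i, h x (NB b i)), Finset.sum_mul_sum]
    simp only [e1, e2, ← Finset.sum_div]
    rw [hdist (fun x y z => h x y * h x z)]
  rw [hA]
  -- per-vertex expander step
  have key : ∀ a : V, (∑ b, ((∑ i, h a (NB b i)) / (e:ℝ)) ^ 2) / m
      ≤ ((∑ b, h a b) / m) ^ 2
        + lam ^ 2 * ((∑ b, (h a b) ^ 2) / m - ((∑ b, h a b) / m) ^ 2) := by
    intro a
    have := step' he NB lam hlam hB (fun b => h a b)
    unfold expec at this
    simpa using this
  set εa : V → ℝ := fun a => (∑ b, h a b) / m with hεa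
  set qa : V → ℝ := fun a => (∑ b, (h a b) ^ 2) / m with hqa
  have hsum : ∑ a, (∑ b, ((∑ i, h a (NB b i)) / (e:ℝ)) ^ 2) / m
      ≤ ∑ a, (εa a ^ 2 + lam ^ 2 * (qa a - εa a ^ 2)) :=
    Finset.sum_le_sum fun a _ => key a
  -- rewrite LHS as (∑ a, (∑ b ...)/m)/n
  have hLHS : (∑ a : V, ∑ b : W, ((∑ i, h a (NB b i)) / (e:ℝ)) ^ 2) / (n * m)
      = (∑ a, (∑ b, ((∑ i, h a (NB b i)) / (e:ℝ)) ^ 2) / m) / n := by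
    rw [← Finset.sum_div, div_div, mul_comm m n]
  -- identities for the RHS
  have hQ : (∑ a : V, ∑ b : W, (h a b) ^ 2) / (n * m) = (∑ a, qa a) / n := by
    rw [hqa, ← Finset.sum_div, div_div, mul_comm m n]
  have hE : (∑ a : V, ∑ b : W, h a b) / (n * m) = (∑ a, εa a) / n := by
    rw [hεa, ← Finset.sum_div, div_div, mul_comm m n]
  have hvar : ((∑ a, εa a) / n) ^ 2 ≤ (∑ a, εa a ^ 2) / n := by
    have := var_nonneg' εa
    unfold expec at this
    simpa using this
  -- assemble
  rw [hLHS, hQ, hE]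
  have hsplit : ∑ a, (εa a ^ 2 + lam ^ 2 * (qa a - εa a ^ 2))
      = ∑ a, εa a ^ 2 + lam ^ 2 * (∑ a, qa a - ∑ a, εa a ^ 2) := by
    rw [Finset.sum_add_distrib, ← Finset.mul_sum, Finset.sum_sub_distrib]
  have hmono : (∑ a, (∑ b, ((∑ i, h a (NB b i)) / (e:ℝ)) ^ 2) / m) / n
      ≤ (∑ a, εa a ^ 2 + lam ^ 2 * (∑ a, qa a - ∑ a, εa a ^ 2)) / n := by
    rw [← hsplit]; gcongr
  have hdiv : (∑ a, εa a ^ 2 + lam ^ 2 * (∑ a, qa a - ∑ a, εa a ^ 2)) / n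
      = (∑ a, εa a ^ 2) / n + lam ^ 2 * ((∑ a, qa a) / n - (∑ a, εa a ^ 2) / n) := by
    field_simp
    try ring
  have hfin : lam ^ 2 * ((∑ a, qa a) / n - (∑ a, εa a ^ 2) / n)
      ≤ lam ^ 2 * ((∑ a, qa a) / n - ((∑ a, εa a) / n) ^ 2) := by
    apply mul_le_mul_of_nonneg_left _ (by positivity)
    linarith
  linarith [hmono, hdiv ▸ hmono]
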